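/- arXiv:1605.07877 — 3 statements merged into one kernel-verified Lean document; each statement's English description precedes it below -/
import Mathlib

section
/- Let U ⊆ ℝ be an open set, let a₀, a₁, a₂ : U → ℂ be differentiable functions, and let u, v : U → ℂ be three times differentiable functions each satisfying the second-order equation a₂·w'' + a₁·w' + a₀·w = 0 on U, where a₂ is nowhere vanishing. Then the product w = u·v satisfies the symmetric square equation a₂²·w''' + 3a₁a₂·w'' + (a₂·(4a₀ + a₁') + a₁·(2a₁ − a₂'))·w' + (2a₂·a₀' − 2a₀·a₂' + 4a₀a₁)·w = 0 on U. (In particular, the solution space of the third-order operator contains all products of pairs of solutions of the second-order operator, i.e., the symmetric square of its solution space.) -/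
/-!
Write `L w = a₂ w'' + a₁ w' + a₀ w`. Expanding `(uv)'''`, `(uv)''`, `(uv)'` by the Leibniz rule,
the left-hand side for `w = uv` is the combination
`a₂ v (L u)' + a₂ u (L v)' + (3 a₂ v' + (2 a₁ - a₂') v) L u + (3 a₂ u' + (2 a₁ - a₂') u) L v`,
and `L u`, `L v` and their derivatives vanish on the open set `U`.
-/

open Set Filter Topology

variable {𝕜 : Type*} [NontriviallyNormedField 𝕜] {𝔸 : Type*} [NormedCommRing 𝔸]
  [NormedAlgebra 𝕜 𝔸] {U : Set 𝕜}

theorem deriv_mul_eqOn {u v : 𝕜 → 𝔸} (hu : ∀ x ∈ U, DifferentiableAt 𝕜 u x)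
    (hv : ∀ x ∈ U, DifferentiableAt 𝕜 v x) :
    EqOn (deriv fun x => u x * v x) (fun x => deriv u x * v x + u x * deriv v x) U :=
  fun x hx => deriv_fun_mul (hu x hx) (hv x hx)

theorem deriv_deriv_mul_eqOn (hU : IsOpen U) {u v : 𝕜 → 𝔸}
    (hu : ∀ x ∈ U, DifferentiableAt 𝕜 u x) (hv : ∀ x ∈ U, DifferentiableAt 𝕜 v x)
    (hu' : ∀ x ∈ U, DifferentiableAt 𝕜 (deriv u) x)
    (hv' : ∀ x ∈ U, DifferentiableAt 𝕜 (deriv v) x) :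
    EqOn (deriv (deriv fun x => u x * v x))
      (fun x => deriv (deriv u) x * v x + 2 * (deriv u x * deriv v x)
        + u x * deriv (deriv v) x) U := by
  intro x hx
  rw [(deriv_mul_eqOn hu hv).deriv hU hx,
    deriv_fun_add ((hu' x hx).fun_mul (hv x hx)) ((hu x hx).fun_mul (hv' x hx)),
    deriv_fun_mul (hu' x hx) (hv x hx), deriv_fun_mul (hu x hx) (hv' x hx)]
  ring

theorem deriv_deriv_deriv_mul (hU : IsOpen U) {u v : 𝕜 → 𝔸}
    (hu : ∀ x ∈ U, DifferentiableAt 𝕜 u x) (hv : ∀ x ∈ U, DifferentiableAt 𝕜 v x)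
    (hu' : ∀ x ∈ U, DifferentiableAt 𝕜 (deriv u) x)
    (hv' : ∀ x ∈ U, DifferentiableAt 𝕜 (deriv v) x)
    {z : 𝕜} (hz : z ∈ U) (hu'' : DifferentiableAt 𝕜 (deriv (deriv u)) z)
    (hv'' : DifferentiableAt 𝕜 (deriv (deriv v)) z) :
    deriv (deriv (deriv fun x => u x * v x)) z
      = deriv (deriv (deriv u)) z * v z + 3 * (deriv (deriv u) z * deriv v z)
        + 3 * (deriv u z * deriv (deriv v) z) + u z * deriv (deriv (deriv v)) z := by
  have hLeibniz := ((hu''.hasDerivAt.fun_mul (hv z hz).hasDerivAt).fun_add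
    (((hu' z hz).hasDerivAt.fun_mul (hv' z hz).hasDerivAt).const_mul 2)).fun_add
    ((hu z hz).hasDerivAt.fun_mul hv''.hasDerivAt)
  rw [(deriv_deriv_mul_eqOn hU hu hv hu' hv').deriv hU hz, hLeibniz.deriv]
  ring

theorem deriv_secondOrder_eq_zero (hU : IsOpen U) {a₀ a₁ a₂ w : 𝕜 → 𝔸}
    (hw : ∀ x ∈ U, a₂ x * deriv (deriv w) x + a₁ x * deriv w x + a₀ x * w x = 0)
    {z : 𝕜} (hz : z ∈ U) (ha₀ : DifferentiableAt 𝕜 a₀ z) (ha₁ : DifferentiableAt 𝕜 a₁ z)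
    (ha₂ : DifferentiableAt 𝕜 a₂ z) (hw₀ : DifferentiableAt 𝕜 w z)
    (hw₁ : DifferentiableAt 𝕜 (deriv w) z) (hw₂ : DifferentiableAt 𝕜 (deriv (deriv w)) z) :
    deriv a₂ z * deriv (deriv w) z + a₂ z * deriv (deriv (deriv w)) z
      + deriv a₁ z * deriv w z + a₁ z * deriv (deriv w) z
      + deriv a₀ z * w z + a₀ z * deriv w z = 0 := by
  have hL := ((ha₂.hasDerivAt.fun_mul hw₂.hasDerivAt).fun_add
    (ha₁.hasDerivAt.fun_mul hw₁.hasDerivAt)).fun_add (ha₀.hasDerivAt.fun_mul hw₀.hasDerivAt)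
  have hL_zero : (fun x => a₂ x * deriv (deriv w) x + a₁ x * deriv w x + a₀ x * w x)
      =ᶠ[𝓝 z] fun _ => 0 :=
    eventuallyEq_of_mem (hU.mem_nhds hz) hw
  have hL_deriv := hL.deriv
  rw [hL_zero.deriv_eq, deriv_const] at hL_deriv
  linear_combination -hL_deriv

theorem symmetric_square_ode_general (U : Set ℝ) (hUopen : IsOpen U)
    (a₀ a₁ a₂ : ℝ → ℂ)
    (ha₀ : ∀ z ∈ U, DifferentiableAt ℝ a₀ z)
    (ha₁ : ∀ z ∈ U, DifferentiableAt ℝ a₁ z)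
    (ha₂ : ∀ z ∈ U, DifferentiableAt ℝ a₂ z)
    (u v : ℝ → ℂ)
    (hu1 : ∀ z ∈ U, DifferentiableAt ℝ u z)
    (hu2 : ∀ z ∈ U, DifferentiableAt ℝ (deriv u) z)
    (hu3 : ∀ z ∈ U, DifferentiableAt ℝ (deriv (deriv u)) z)
    (hv1 : ∀ z ∈ U, DifferentiableAt ℝ v z)
    (hv2 : ∀ z ∈ U, DifferentiableAt ℝ (deriv v) z)
    (hv3 : ∀ z ∈ U, DifferentiableAt ℝ (deriv (deriv v)) z)
    (hueq : ∀ z ∈ U, a₂ z * deriv (deriv u) z + a₁ z * deriv u z + a₀ z * u z = 0)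
    (hveq : ∀ z ∈ U, a₂ z * deriv (deriv v) z + a₁ z * deriv v z + a₀ z * v z = 0) :
    ∀ z ∈ U,
      (a₂ z) ^ 2 * deriv (deriv (deriv (fun x : ℝ => u x * v x))) z
        + 3 * a₁ z * a₂ z * deriv (deriv (fun x : ℝ => u x * v x)) z
        + (a₂ z * (4 * a₀ z + deriv a₁ z) + a₁ z * (2 * a₁ z - deriv a₂ z))
            * deriv (fun x : ℝ => u x * v x) z
        + (2 * a₂ z * deriv a₀ z - 2 * a₀ z * deriv a₂ z + 4 * a₀ z * a₁ z)
            * (u z * v z) = 0 := by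
  intro z hz
  have hDu := deriv_secondOrder_eq_zero hUopen hueq hz (ha₀ z hz) (ha₁ z hz) (ha₂ z hz)
    (hu1 z hz) (hu2 z hz) (hu3 z hz)
  have hDv := deriv_secondOrder_eq_zero hUopen hveq hz (ha₀ z hz) (ha₁ z hz) (ha₂ z hz)
    (hv1 z hz) (hv2 z hz) (hv3 z hz)
  rw [deriv_mul_eqOn hu1 hv1 hz, deriv_deriv_mul_eqOn hUopen hu1 hv1 hu2 hv2 hz,
    deriv_deriv_deriv_mul hUopen hu1 hv1 hu2 hv2 hz (hu3 z hz) (hv3 z hz)]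
  linear_combination (a₂ z * v z) * hDu + (a₂ z * u z) * hDv
    + (3 * a₂ z * deriv v z + (2 * a₁ z - deriv a₂ z) * v z) * hueq z hz
    + (3 * a₂ z * deriv u z + (2 * a₁ z - deriv a₂ z) * u z) * hveq z hz

/-- Symmetric square of a second-order linear ODE: if `u` and `v` each satisfy
`a₂w'' + a₁w' + a₀w = 0` on an open set `U` (with differentiable coefficients and
nowhere vanishing leading coefficient `a₂`), then the product `w = u·v` satisfies
`a₂²w''' + 3a₁a₂w'' + (a₂(4a₀+a₁') + a₁(2a₁−a₂'))w' + (2a₂a₀' − 2a₀a₂' + 4a₀a₁)w = 0`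
on `U`. -/
theorem symmetric_square_ode (U : Set ℝ) (hUopen : IsOpen U)
    (a₀ a₁ a₂ : ℝ → ℂ)
    (ha₀ : ∀ z ∈ U, DifferentiableAt ℝ a₀ z)
    (ha₁ : ∀ z ∈ U, DifferentiableAt ℝ a₁ z)
    (ha₂ : ∀ z ∈ U, DifferentiableAt ℝ a₂ z)
    (ha₂ne : ∀ z ∈ U, a₂ z ≠ 0)
    (u v : ℝ → ℂ)
    (hu1 : ∀ z ∈ U, DifferentiableAt ℝ u z)
    (hu2 : ∀ z ∈ U, DifferentiableAt ℝ (deriv u) z)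
    (hu3 : ∀ z ∈ U, DifferentiableAt ℝ (deriv (deriv u)) z)
    (hv1 : ∀ z ∈ U, DifferentiableAt ℝ v z)
    (hv2 : ∀ z ∈ U, DifferentiableAt ℝ (deriv v) z)
    (hv3 : ∀ z ∈ U, DifferentiableAt ℝ (deriv (deriv v)) z)
    (hueq : ∀ z ∈ U, a₂ z * deriv (deriv u) z + a₁ z * deriv u z + a₀ z * u z = 0)
    (hveq : ∀ z ∈ U, a₂ z * deriv (deriv v) z + a₁ z * deriv v z + a₀ z * v z = 0) :
    ∀ z ∈ U,
      (a₂ z) ^ 2 * deriv (deriv (deriv (fun x : ℝ => u x * v x))) z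
        + 3 * a₁ z * a₂ z * deriv (deriv (fun x : ℝ => u x * v x)) z
        + (a₂ z * (4 * a₀ z + deriv a₁ z) + a₁ z * (2 * a₁ z - deriv a₂ z))
            * deriv (fun x : ℝ => u x * v x) z
        + (2 * a₂ z * deriv a₀ z - 2 * a₀ z * deriv a₂ z + 4 * a₀ z * a₁ z)
            * (u z * v z) = 0 :=
  symmetric_square_ode_general U hUopen a₀ a₁ a₂ ha₀ ha₁ ha₂ u v hu1 hu2 hu3 hv1 hv2 hv3 hueq hveq
end

section
/- Let U be an open subset of the real interval (0,1) and let u : U → ℂ be a three times differentiable function satisfying the second-order equation z(1−z)·u''(z) + (1 − (3/2)z)·u'(z) − (3/64)·u(z) = 0 on U (the hypergeometric equation with a = 1/8, b = 3/8, c = 1, i.e., the operator L_triangular = θ² − z(θ+1/8)(θ+3/8)). Then w = u² satisfies the third-order Picard–Fuchs equation of the Dwork pencil of quartic K3 surfaces, z²(1−z)·w'''(z) + z(3 − (9/2)z)·w''(z) + (1 − (51/16)z)·w'(z) − (3/32)·w(z) = 0 on U (the operator L_K3 = θ³ − z(θ+1/4)(θ+1/2)(θ+3/4)). -/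
/-!
Differentiating the hypergeometric operator `H_{a,b,c} u = z(1-z)u'' + (c - (a+b+1)z)u' - ab u`
gives `(H_{a,b,c} u)' = H_{a+1,b+1,c+1} u'`, so `u'` is annihilated by the shifted operator
whenever `u` is annihilated by `H_{a,b,c}`. For `(a,b,c) = (1/8,3/8,1)`, expanding the derivatives
of `u²` shows that the K3 operator applied to `u²` equals
`(6zu' + 2u) · H_{a,b,c} u + 2zu · H_{a+1,b+1,c+1} u'`, which vanishes.
-/

open Set

section SquareDerivatives

variable {𝕜 𝔸 : Type*} [NontriviallyNormedField 𝕜] [NormedCommRing 𝔸] [NormedAlgebra 𝕜 𝔸]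
  {u : 𝕜 → 𝔸} {U : Set 𝕜}

theorem eqOn_deriv_sq (hu : ∀ x ∈ U, DifferentiableAt 𝕜 u x) :
    EqOn (deriv fun t => u t ^ 2) (fun t => 2 * (u t * deriv u t)) U := fun x hx => by
  rw [deriv_fun_pow (hu x hx)]
  norm_num
  ring

theorem eqOn_deriv_deriv_sq (hU : IsOpen U) (hu : ∀ x ∈ U, DifferentiableAt 𝕜 u x)
    (hu' : ∀ x ∈ U, DifferentiableAt 𝕜 (deriv u) x) :
    EqOn (deriv (deriv fun t => u t ^ 2))
      (fun t => 2 * (deriv u t ^ 2 + u t * deriv (deriv u) t)) U := fun x hx => by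
  rw [((eqOn_deriv_sq hu).eventuallyEq_of_mem (hU.mem_nhds hx)).deriv_eq]
  refine (((hu x hx).hasDerivAt.fun_mul (hu' x hx).hasDerivAt).const_mul (2 : 𝔸)).deriv.trans ?_
  ring

theorem eqOn_deriv_deriv_deriv_sq (hU : IsOpen U) (hu : ∀ x ∈ U, DifferentiableAt 𝕜 u x)
    (hu' : ∀ x ∈ U, DifferentiableAt 𝕜 (deriv u) x)
    (hu'' : ∀ x ∈ U, DifferentiableAt 𝕜 (deriv (deriv u)) x) :
    EqOn (deriv (deriv (deriv fun t => u t ^ 2)))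
      (fun t => 2 * (3 * deriv u t * deriv (deriv u) t + u t * deriv (deriv (deriv u)) t)) U :=
  fun x hx => by
  have hsq := (hu' x hx).hasDerivAt.fun_pow 2
  have hprod := (hu x hx).hasDerivAt.fun_mul (hu'' x hx).hasDerivAt
  rw [((eqOn_deriv_deriv_sq hU hu hu').eventuallyEq_of_mem (hU.mem_nhds hx)).deriv_eq]
  refine ((hsq.fun_add hprod).const_mul (2 : 𝔸)).deriv.trans ?_
  norm_num
  ring

end SquareDerivatives

noncomputable def hypergeometricOp (a b c : ℂ) (u : ℝ → ℂ) (z : ℝ) : ℂ :=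
  z * (1 - z) * deriv (deriv u) z + (c - (a + b + 1) * z) * deriv u z - a * b * u z

theorem hasDerivAt_hypergeometricOp {a b c : ℂ} {u : ℝ → ℂ} {z : ℝ}
    (hu : DifferentiableAt ℝ u z) (hu' : DifferentiableAt ℝ (deriv u) z)
    (hu'' : DifferentiableAt ℝ (deriv (deriv u)) z) :
    HasDerivAt (hypergeometricOp a b c u)
      (hypergeometricOp (a + 1) (b + 1) (c + 1) (deriv u) z) z := by
  have hid : HasDerivAt (fun t : ℝ => (t : ℂ)) 1 z := Complex.ofRealCLM.hasDerivAt
  have h := (((hid.fun_mul ((hasDerivAt_const z 1).fun_sub hid)).fun_mul hu''.hasDerivAt).fun_add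
    (((hasDerivAt_const z c).fun_sub (hid.const_mul (a + b + 1))).fun_mul hu'.hasDerivAt)).fun_sub
    (hu.hasDerivAt.const_mul (a * b))
  refine h.congr_deriv ?_
  unfold hypergeometricOp
  ring

theorem hypergeometricOp_deriv_eq_zero {a b c : ℂ} {u : ℝ → ℂ} {U : Set ℝ} (hU : IsOpen U)
    (hu : ∀ x ∈ U, DifferentiableAt ℝ u x) (hu' : ∀ x ∈ U, DifferentiableAt ℝ (deriv u) x)
    (hu'' : ∀ x ∈ U, DifferentiableAt ℝ (deriv (deriv u)) x)
    (h : ∀ x ∈ U, hypergeometricOp a b c u x = 0) :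
    ∀ x ∈ U, hypergeometricOp (a + 1) (b + 1) (c + 1) (deriv u) x = 0 := fun x hx => by
  have hzero : EqOn (hypergeometricOp a b c u) 0 U := h
  rw [← (hasDerivAt_hypergeometricOp (hu x hx) (hu' x hx) (hu'' x hx)).deriv,
    (hzero.eventuallyEq_of_mem (hU.mem_nhds hx)).deriv_eq]
  exact deriv_const x 0

theorem K3_picard_fuchs_symmetric_square_general (U : Set ℝ) (hUopen : IsOpen U)
    (u : ℝ → ℂ)
    (hu1 : ∀ z ∈ U, DifferentiableAt ℝ u z)
    (hu2 : ∀ z ∈ U, DifferentiableAt ℝ (deriv u) z)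
    (hu3 : ∀ z ∈ U, DifferentiableAt ℝ (deriv (deriv u)) z)
    (hueq : ∀ z ∈ U,
      (z : ℂ) * (1 - (z : ℂ)) * deriv (deriv u) z
        + (1 - (3/2 : ℂ) * (z : ℂ)) * deriv u z - (3/64 : ℂ) * u z = 0) :
    ∀ z ∈ U,
      (z : ℂ) ^ 2 * (1 - (z : ℂ)) * deriv (deriv (deriv (fun x : ℝ => (u x) ^ 2))) z
        + (z : ℂ) * (3 - (9/2 : ℂ) * (z : ℂ)) * deriv (deriv (fun x : ℝ => (u x) ^ 2)) z
        + (1 - (51/16 : ℂ) * (z : ℂ)) * deriv (fun x : ℝ => (u x) ^ 2) z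
        - (3/32 : ℂ) * (u z) ^ 2 = 0 := by
  have hu_hyp : ∀ z ∈ U, hypergeometricOp (1/8) (3/8) 1 u z = 0 := fun z hz => by
    unfold hypergeometricOp
    linear_combination hueq z hz
  have hu'_hyp := hypergeometricOp_deriv_eq_zero hUopen hu1 hu2 hu3 hu_hyp
  intro z hz
  rw [eqOn_deriv_deriv_deriv_sq hUopen hu1 hu2 hu3 hz, eqOn_deriv_deriv_sq hUopen hu1 hu2 hz,
    eqOn_deriv_sq hu1 hz]
  have h := hu_hyp z hz
  have h' := hu'_hyp z hz
  unfold hypergeometricOp at h h'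
  linear_combination (6 * z * deriv u z + 2 * u z) * h + 2 * z * u z * h'

/-- If `u` satisfies the hypergeometric equation
`z(1−z)u'' + (1−(3/2)z)u' − (3/64)u = 0` (the operator `θ² − z(θ+1/8)(θ+3/8)`)
on an open set `U ⊆ (0,1)`, then `w = u²` satisfies the third-order Picard–Fuchs
equation of the Dwork pencil of quartic K3 surfaces,
`z²(1−z)w''' + z(3−(9/2)z)w'' + (1−(51/16)z)w' − (3/32)w = 0`
(the operator `θ³ − z(θ+1/4)(θ+1/2)(θ+3/4)`). -/
theorem K3_picard_fuchs_symmetric_square (U : Set ℝ) (hUopen : IsOpen U)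
    (hU : U ⊆ Set.Ioo (0 : ℝ) 1)
    (u : ℝ → ℂ)
    (hu1 : ∀ z ∈ U, DifferentiableAt ℝ u z)
    (hu2 : ∀ z ∈ U, DifferentiableAt ℝ (deriv u) z)
    (hu3 : ∀ z ∈ U, DifferentiableAt ℝ (deriv (deriv u)) z)
    (hueq : ∀ z ∈ U,
      (z : ℂ) * (1 - (z : ℂ)) * deriv (deriv u) z
        + (1 - (3/2 : ℂ) * (z : ℂ)) * deriv u z - (3/64 : ℂ) * u z = 0) :
    ∀ z ∈ U,
      (z : ℂ) ^ 2 * (1 - (z : ℂ)) * deriv (deriv (deriv (fun x : ℝ => (u x) ^ 2))) z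
        + (z : ℂ) * (3 - (9/2 : ℂ) * (z : ℂ)) * deriv (deriv (fun x : ℝ => (u x) ^ 2)) z
        + (1 - (51/16 : ℂ) * (z : ℂ)) * deriv (fun x : ℝ => (u x) ^ 2) z
        - (3/32 : ℂ) * (u z) ^ 2 = 0 :=
  K3_picard_fuchs_symmetric_square_general U hUopen u hu1 hu2 hu3 hueq
end

section
/- Let U ⊆ (0,1) be an open interval and let u₀, u₁ : U → ℂ be twice differentiable solutions of z(1−z)·u'' + (1 − (3/2)z)·u' − (3/64)·u = 0 on U. Define the three periods π₀ = u₀², π₁ = u₀u₁, π₂ = u₁² (solutions of the K3 Picard–Fuchs equation). Then the function z ↦ (π₀(z)·π₂''(z) + π₂(z)·π₀''(z) − 2π₁(z)·π₁''(z)) · z²(1−z) is constant on U; that is, the Yukawa-type bilinear combination π₀π₂'' + π₂π₀'' − 2π₁π₁'' equals a constant multiple of 1/(z²(1−z)), recovering the K3 Yukawa coupling C_zz = 1/(z²(1−z)) up to normalization. -/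
/-!
Let `W = u₀u₁' − u₁u₀'` be the Wronskian. By the Leibniz rule the second derivatives of `u₀` and
`u₁` cancel from `π₀π₂'' + π₂π₀'' − 2π₁π₁''`, which is just `2W²`. Abel's identity for the
equation gives `z(1−z)W' = −(1 − 3z/2)W`, and this is exactly what makes `(W² z²(1−z))' = 0`.
-/

open Filter Topology

section Leibniz

variable {𝕜 𝔸 : Type*} [NontriviallyNormedField 𝕜] [NormedRing 𝔸] [NormedAlgebra 𝕜 𝔸]
  {f g : 𝕜 → 𝔸} {y : 𝕜}

theorem deriv_deriv_fun_mul (hf : ∀ᶠ x in 𝓝 y, DifferentiableAt 𝕜 f x)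
    (hg : ∀ᶠ x in 𝓝 y, DifferentiableAt 𝕜 g x)
    (hf' : DifferentiableAt 𝕜 (deriv f) y) (hg' : DifferentiableAt 𝕜 (deriv g) y) :
    deriv (deriv fun x => f x * g x) y
      = deriv (deriv f) y * g y + 2 * (deriv f y * deriv g y) + f y * deriv (deriv g) y := by
  have hderiv : deriv (fun x => f x * g x) =ᶠ[𝓝 y] fun x => deriv f x * g x + f x * deriv g x :=
    (hf.and hg).mono fun x hx => deriv_fun_mul hx.1 hx.2
  rw [hderiv.deriv_eq, deriv_fun_add (hf'.fun_mul hg.self_of_nhds) (hf.self_of_nhds.fun_mul hg'),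
    deriv_fun_mul hf' hg.self_of_nhds, deriv_fun_mul hf.self_of_nhds hg']
  noncomm_ring

end Leibniz

section Wronskian

variable {𝕜 𝔸 : Type*} [NontriviallyNormedField 𝕜] [NormedCommRing 𝔸] [NormedAlgebra 𝕜 𝔸]
  {f g : 𝕜 → 𝔸} {y : 𝕜}

noncomputable def wronskian (f g : 𝕜 → 𝔸) (x : 𝕜) : 𝔸 := f x * deriv g x - g x * deriv f x

theorem sq_mul_deriv_deriv_sq_add_sub_eq_two_mul_wronskian_sq
    (hf : ∀ᶠ x in 𝓝 y, DifferentiableAt 𝕜 f x) (hg : ∀ᶠ x in 𝓝 y, DifferentiableAt 𝕜 g x)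
    (hf' : DifferentiableAt 𝕜 (deriv f) y) (hg' : DifferentiableAt 𝕜 (deriv g) y) :
    f y ^ 2 * deriv (deriv fun x => g x ^ 2) y + g y ^ 2 * deriv (deriv fun x => f x ^ 2) y
        - 2 * (f y * g y) * deriv (deriv fun x => f x * g x) y
      = 2 * wronskian f g y ^ 2 := by
  simp only [sq, deriv_deriv_fun_mul hf hf hf' hf', deriv_deriv_fun_mul hg hg hg' hg',
    deriv_deriv_fun_mul hf hg hf' hg', wronskian]
  ring

theorem hasDerivAt_wronskian (hf : DifferentiableAt 𝕜 f y) (hg : DifferentiableAt 𝕜 g y)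
    (hf' : DifferentiableAt 𝕜 (deriv f) y) (hg' : DifferentiableAt 𝕜 (deriv g) y) :
    HasDerivAt (wronskian f g) (f y * deriv (deriv g) y - g y * deriv (deriv f) y) y :=
  ((hf.hasDerivAt.fun_mul hg'.hasDerivAt).fun_sub
    (hg.hasDerivAt.fun_mul hf'.hasDerivAt)).congr_deriv (by ring)

theorem mul_deriv_wronskian_add_mul_wronskian_eq_zero {a b c : 𝔸}
    (hf : DifferentiableAt 𝕜 f y) (hg : DifferentiableAt 𝕜 g y)
    (hf' : DifferentiableAt 𝕜 (deriv f) y) (hg' : DifferentiableAt 𝕜 (deriv g) y)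
    (hodef : a * deriv (deriv f) y + b * deriv f y + c * f y = 0)
    (hodeg : a * deriv (deriv g) y + b * deriv g y + c * g y = 0) :
    a * deriv (wronskian f g) y + b * wronskian f g y = 0 := by
  rw [(hasDerivAt_wronskian hf hg hf' hg').deriv, wronskian]
  linear_combination f y * hodeg - g y * hodef

end Wronskian

theorem hasDerivAt_wronskian_sq_mul_eq_zero {u₀ u₁ : ℝ → ℂ} {q : ℂ} {z : ℝ}
    (hu₀ : DifferentiableAt ℝ u₀ z) (hu₁ : DifferentiableAt ℝ u₁ z)
    (hu₀' : DifferentiableAt ℝ (deriv u₀) z) (hu₁' : DifferentiableAt ℝ (deriv u₁) z)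
    (hode₀ : (z : ℂ) * (1 - z) * deriv (deriv u₀) z + (1 - 3 / 2 * z) * deriv u₀ z
      + q * u₀ z = 0)
    (hode₁ : (z : ℂ) * (1 - z) * deriv (deriv u₁) z + (1 - 3 / 2 * z) * deriv u₁ z
      + q * u₁ z = 0) :
    HasDerivAt (fun x : ℝ => wronskian u₀ u₁ x ^ 2 * ((x : ℂ) ^ 2 * (1 - x))) 0 z := by
  have habel := mul_deriv_wronskian_add_mul_wronskian_eq_zero hu₀ hu₁ hu₀' hu₁' hode₀ hode₁
  have hW := (hasDerivAt_wronskian hu₀ hu₁ hu₀' hu₁').differentiableAt.hasDerivAt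
  have hpoly : HasDerivAt (fun x : ℝ => (x : ℂ) ^ 2 * (1 - x)) (2 * z - 3 * z ^ 2 : ℂ) z := by
    have := ((hasDerivAt_pow 2 z).fun_mul ((hasDerivAt_id' z).const_sub 1)).ofReal_comp
    push_cast at this
    exact this.congr_deriv (by ring)
  exact ((hW.fun_pow 2).fun_mul hpoly).congr_deriv
    (by linear_combination (2 * z * wronskian u₀ u₁ z) * habel)

theorem K3_yukawa_bilinear_constant_general (c d : ℝ)
    (u₀ u₁ : ℝ → ℂ)
    (hu₀1 : ∀ z ∈ Set.Ioo c d, DifferentiableAt ℝ u₀ z)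
    (hu₀2 : ∀ z ∈ Set.Ioo c d, DifferentiableAt ℝ (deriv u₀) z)
    (hu₁1 : ∀ z ∈ Set.Ioo c d, DifferentiableAt ℝ u₁ z)
    (hu₁2 : ∀ z ∈ Set.Ioo c d, DifferentiableAt ℝ (deriv u₁) z)
    (hode₀ : ∀ z ∈ Set.Ioo c d,
      (z : ℂ) * (1 - (z : ℂ)) * deriv (deriv u₀) z
        + (1 - (3/2 : ℂ) * (z : ℂ)) * deriv u₀ z - (3/64 : ℂ) * u₀ z = 0)
    (hode₁ : ∀ z ∈ Set.Ioo c d,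
      (z : ℂ) * (1 - (z : ℂ)) * deriv (deriv u₁) z
        + (1 - (3/2 : ℂ) * (z : ℂ)) * deriv u₁ z - (3/64 : ℂ) * u₁ z = 0) :
    ∃ C : ℂ, ∀ z ∈ Set.Ioo c d,
      ((fun x : ℝ => (u₀ x) ^ 2) z * deriv (deriv (fun x : ℝ => (u₁ x) ^ 2)) z
        + (fun x : ℝ => (u₁ x) ^ 2) z * deriv (deriv (fun x : ℝ => (u₀ x) ^ 2)) z
        - 2 * (fun x : ℝ => u₀ x * u₁ x) z
            * deriv (deriv (fun x : ℝ => u₀ x * u₁ x)) z)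
        * ((z : ℂ) ^ 2 * (1 - (z : ℂ))) = C := by
  have hG : ∀ z ∈ Set.Ioo c d,
      HasDerivAt (fun x : ℝ => wronskian u₀ u₁ x ^ 2 * ((x : ℂ) ^ 2 * (1 - x))) 0 z :=
    fun z hz => hasDerivAt_wronskian_sq_mul_eq_zero (q := -(3 / 64)) (hu₀1 z hz) (hu₁1 z hz)
      (hu₀2 z hz) (hu₁2 z hz) (by linear_combination hode₀ z hz)
      (by linear_combination hode₁ z hz)
  obtain ⟨C, hC⟩ := isOpen_Ioo.exists_is_const_of_deriv_eq_zero isPreconnected_Ioo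
    (fun z hz => (hG z hz).differentiableAt.differentiableWithinAt) (fun z hz => (hG z hz).deriv)
  refine ⟨2 * C, fun z hz => ?_⟩
  have hnhds := isOpen_Ioo.mem_nhds hz
  rw [sq_mul_deriv_deriv_sq_add_sub_eq_two_mul_wronskian_sq (eventually_of_mem hnhds hu₀1)
    (eventually_of_mem hnhds hu₁1) (hu₀2 z hz) (hu₁2 z hz), ← hC z hz]
  ring

/-- If `u₀, u₁` solve `z(1−z)u'' + (1−(3/2)z)u' − (3/64)u = 0` on an open interval
`U ⊆ (0,1)`, and `π₀ = u₀²`, `π₁ = u₀u₁`, `π₂ = u₁²` are the corresponding solutions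
of the K3 Picard–Fuchs equation, then `(π₀π₂'' + π₂π₀'' − 2π₁π₁'')·z²(1−z)` is
constant on `U`; i.e. `π₀π₂'' + π₂π₀'' − 2π₁π₁''` is a constant multiple of
`1/(z²(1−z))`, recovering the K3 Yukawa coupling `C_zz = 1/(z²(1−z))`. -/
theorem K3_yukawa_bilinear_constant (c d : ℝ)
    (hU : Set.Ioo c d ⊆ Set.Ioo (0 : ℝ) 1)
    (u₀ u₁ : ℝ → ℂ)
    (hu₀1 : ∀ z ∈ Set.Ioo c d, DifferentiableAt ℝ u₀ z)
    (hu₀2 : ∀ z ∈ Set.Ioo c d, DifferentiableAt ℝ (deriv u₀) z)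
    (hu₁1 : ∀ z ∈ Set.Ioo c d, DifferentiableAt ℝ u₁ z)
    (hu₁2 : ∀ z ∈ Set.Ioo c d, DifferentiableAt ℝ (deriv u₁) z)
    (hode₀ : ∀ z ∈ Set.Ioo c d,
      (z : ℂ) * (1 - (z : ℂ)) * deriv (deriv u₀) z
        + (1 - (3/2 : ℂ) * (z : ℂ)) * deriv u₀ z - (3/64 : ℂ) * u₀ z = 0)
    (hode₁ : ∀ z ∈ Set.Ioo c d,
      (z : ℂ) * (1 - (z : ℂ)) * deriv (deriv u₁) z
        + (1 - (3/2 : ℂ) * (z : ℂ)) * deriv u₁ z - (3/64 : ℂ) * u₁ z = 0) :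
    ∃ C : ℂ, ∀ z ∈ Set.Ioo c d,
      ((fun x : ℝ => (u₀ x) ^ 2) z * deriv (deriv (fun x : ℝ => (u₁ x) ^ 2)) z
        + (fun x : ℝ => (u₁ x) ^ 2) z * deriv (deriv (fun x : ℝ => (u₀ x) ^ 2)) z
        - 2 * (fun x : ℝ => u₀ x * u₁ x) z
            * deriv (deriv (fun x : ℝ => u₀ x * u₁ x)) z)
        * ((z : ℂ) ^ 2 * (1 - (z : ℂ))) = C :=
  K3_yukawa_bilinear_constant_general c d u₀ u₁ hu₀1 hu₀2 hu₁1 hu₁2 hode₀ hode₁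
end
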